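/- Let p be a prime and let R = 𝔽_p[x^{±1}, y^{±1}] be the ring of Laurent polynomials in two variables over 𝔽_p, i.e. the group algebra of ℤ × ℤ over ZMod p, in which the monomial x^n y^m is the basis element at (n, m). Let A ⊆ R be the 𝔽_p-subalgebra generated by the four elements x·y^{-1}, x^{-1}·y, x, and y. Then A equals the 𝔽_p-linear span in R of the set of all monomials x^n y^m with n + m ≥ 0. Equivalently, a Laurent polynomial f ∈ R lies in A if and only if every pair (n, m) in the support of f satisfies n + m ≥ 0. -/

import Mathlib

open AddMonoidAlgebra

section aux

variable (p : ℕ) [Fact p.Prime]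

abbrev genSet (p : ℕ) [Fact p.Prime] : Set (AddMonoidAlgebra (ZMod p) (ℤ × ℤ)) :=
  {AddMonoidAlgebra.single ((1 : ℤ), (-1 : ℤ)) (1 : ZMod p),
   AddMonoidAlgebra.single ((-1 : ℤ), (1 : ℤ)) (1 : ZMod p),
   AddMonoidAlgebra.single ((1 : ℤ), (0 : ℤ)) (1 : ZMod p),
   AddMonoidAlgebra.single ((0 : ℤ), (1 : ℤ)) (1 : ZMod p)}

def goodSubalg (p : ℕ) [Fact p.Prime] :
    Subalgebra (ZMod p) (AddMonoidAlgebra (ZMod p) (ℤ × ℤ)) where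
  carrier := {f | ∀ q ∈ f.coeff.support, 0 ≤ q.1 + q.2}
  mul_mem' := by
    intro f g hf hg q hq
    have h := AddMonoidAlgebra.support_coeff_mul_subset f g hq
    rw [Finset.mem_add] at h
    obtain ⟨a, ha, b, hb, rfl⟩ := h
    have := hf a ha; have := hg b hb
    simp only [Prod.fst_add, Prod.snd_add]
    omega
  add_mem' := by
    intro f g hf hg q hq
    have h := Finsupp.support_add hq
    rw [Finset.mem_union] at h
    rcases h with h | h
    · exact hf q h
    · exact hg q h
  algebraMap_mem' := by
    intro c q hq
    have h := Finsupp.support_single_subset hq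
    simp only [Finset.mem_singleton] at h
    subst h
    norm_num

lemma smul_pair (k : ℕ) (a b : ℤ) : k • ((a, b) : ℤ × ℤ) = ((k : ℤ) * a, (k : ℤ) * b) := by
  simp [Prod.smul_mk, nsmul_eq_mul]

lemma single_mem_adjoin (n m : ℤ) (h : 0 ≤ n + m) :
    AddMonoidAlgebra.single ((n, m) : ℤ × ℤ) (1 : ZMod p) ∈ Algebra.adjoin (ZMod p) (genSet p) := by
  have key : ∀ (a b : ℤ × ℤ) (j k : ℕ),
      AddMonoidAlgebra.single a (1 : ZMod p) ∈ Algebra.adjoin (ZMod p) (genSet p) →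
      AddMonoidAlgebra.single b (1 : ZMod p) ∈ Algebra.adjoin (ZMod p) (genSet p) →
      AddMonoidAlgebra.single (j • a + k • b) (1 : ZMod p) ∈ Algebra.adjoin (ZMod p) (genSet p) := by
    intro a b j k ha hb
    have : AddMonoidAlgebra.single (j • a + k • b) (1 : ZMod p)
        = AddMonoidAlgebra.single a (1 : ZMod p) ^ j * AddMonoidAlgebra.single b (1 : ZMod p) ^ k := by
      rw [AddMonoidAlgebra.single_pow, AddMonoidAlgebra.single_pow,
        AddMonoidAlgebra.single_mul_single]
      simp
    rw [this]
    exact mul_mem (pow_mem ha j) (pow_mem hb k)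
  have g1 : AddMonoidAlgebra.single ((1 : ℤ), (-1 : ℤ)) (1 : ZMod p) ∈ Algebra.adjoin (ZMod p) (genSet p) :=
    Algebra.subset_adjoin (by simp [genSet])
  have g2 : AddMonoidAlgebra.single ((-1 : ℤ), (1 : ℤ)) (1 : ZMod p) ∈ Algebra.adjoin (ZMod p) (genSet p) :=
    Algebra.subset_adjoin (by simp [genSet])
  have g3 : AddMonoidAlgebra.single ((1 : ℤ), (0 : ℤ)) (1 : ZMod p) ∈ Algebra.adjoin (ZMod p) (genSet p) :=
    Algebra.subset_adjoin (by simp [genSet])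
  have g4 : AddMonoidAlgebra.single ((0 : ℤ), (1 : ℤ)) (1 : ZMod p) ∈ Algebra.adjoin (ZMod p) (genSet p) :=
    Algebra.subset_adjoin (by simp [genSet])
  rcases le_or_gt 0 n with hn | hn
  · rcases le_or_gt 0 m with hm | hm
    · have := key _ _ n.toNat m.toNat g3 g4
      rw [smul_pair, smul_pair] at this
      simpa [Int.toNat_of_nonneg hn, Int.toNat_of_nonneg hm] using this
    · have := key _ _ (-m).toNat (n + m).toNat g1 g3
      rw [smul_pair, smul_pair] at this
      rw [Int.toNat_of_nonneg (by omega), Int.toNat_of_nonneg h] at this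
      rw [show (((-m * 1, -m * -1) + ((n + m) * 1, (n + m) * 0)) : ℤ × ℤ) = ((n, m) : ℤ × ℤ) by
        rw [Prod.mk_add_mk]; congr 1 <;> ring] at this
      exact this
  · have := key _ _ (-n).toNat (n + m).toNat g2 g4
    rw [smul_pair, smul_pair] at this
    rw [Int.toNat_of_nonneg (by omega), Int.toNat_of_nonneg h] at this
    rw [show (((-n * -1, -n * 1) + ((n + m) * 0, (n + m) * 1)) : ℤ × ℤ) = ((n, m) : ℤ × ℤ) by
      rw [Prod.mk_add_mk]; congr 1 <;> ring] at this
    exact this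

lemma mem_span_of_support (f : AddMonoidAlgebra (ZMod p) (ℤ × ℤ))
    (hf : ∀ q ∈ f.coeff.support, 0 ≤ q.1 + q.2) :
    f ∈ Submodule.span (ZMod p)
      {g : AddMonoidAlgebra (ZMod p) (ℤ × ℤ) |
        ∃ n m : ℤ, 0 ≤ n + m ∧ g = AddMonoidAlgebra.single (n, m) (1 : ZMod p)} := by
  have : f = ∑ q ∈ f.coeff.support, (f.coeff q) • AddMonoidAlgebra.single q (1 : ZMod p) := by
    conv_lhs => rw [← AddMonoidAlgebra.sum_coeff_single f]
    rw [Finsupp.sum]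
    congr 1; ext q
    rw [AddMonoidAlgebra.smul_single', mul_one]
  rw [this]
  apply Submodule.sum_mem
  intro q hq
  exact Submodule.smul_mem _ _ (Submodule.subset_span ⟨q.1, q.2, hf q hq, by simp⟩)

end aux

/-- The kernel computation in the proof of Proposition 2.7 (alglemma).
In the Laurent polynomial ring `R = 𝔽_p[x^{±1}, y^{±1}]`, realized as the group algebra
`AddMonoidAlgebra (ZMod p) (ℤ × ℤ)` (the monomial `x^n y^m` being the basis element at
`(n, m)`), the `𝔽_p`-subalgebra `A` generated by `x·y⁻¹`, `x⁻¹·y`, `x` and `y` equals the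
`𝔽_p`-linear span of the monomials `x^n y^m` with `n + m ≥ 0`; equivalently, `f ∈ A` iff
every `(n, m)` in the support of `f` satisfies `n + m ≥ 0`. -/
theorem adjoin_eq_span_monomials_nonneg (p : ℕ) [Fact p.Prime] :
    (Subalgebra.toSubmodule (Algebra.adjoin (ZMod p)
        ({AddMonoidAlgebra.single ((1 : ℤ), (-1 : ℤ)) (1 : ZMod p),
          AddMonoidAlgebra.single ((-1 : ℤ), (1 : ℤ)) (1 : ZMod p),
          AddMonoidAlgebra.single ((1 : ℤ), (0 : ℤ)) (1 : ZMod p),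
          AddMonoidAlgebra.single ((0 : ℤ), (1 : ℤ)) (1 : ZMod p)} :
          Set (AddMonoidAlgebra (ZMod p) (ℤ × ℤ))))
      = Submodule.span (ZMod p)
          {f : AddMonoidAlgebra (ZMod p) (ℤ × ℤ) |
            ∃ n m : ℤ, 0 ≤ n + m ∧ f = AddMonoidAlgebra.single (n, m) (1 : ZMod p)}) ∧
    (∀ f : AddMonoidAlgebra (ZMod p) (ℤ × ℤ),
      f ∈ Algebra.adjoin (ZMod p)
        ({AddMonoidAlgebra.single ((1 : ℤ), (-1 : ℤ)) (1 : ZMod p),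
          AddMonoidAlgebra.single ((-1 : ℤ), (1 : ℤ)) (1 : ZMod p),
          AddMonoidAlgebra.single ((1 : ℤ), (0 : ℤ)) (1 : ZMod p),
          AddMonoidAlgebra.single ((0 : ℤ), (1 : ℤ)) (1 : ZMod p)} :
          Set (AddMonoidAlgebra (ZMod p) (ℤ × ℤ)))
        ↔ ∀ q ∈ f.coeff.support, 0 ≤ q.1 + q.2) := by
  have hadj : Algebra.adjoin (ZMod p) (genSet p) ≤ goodSubalg p := by
    apply Algebra.adjoin_le
    rintro g (rfl | rfl | rfl | rfl) <;>
    · intro q hq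
      have h := Finsupp.support_single_subset hq
      simp only [Finset.mem_singleton] at h
      subst h
      norm_num
  constructor
  · apply le_antisymm
    · intro f hf
      exact mem_span_of_support p f (hadj hf)
    · rw [Submodule.span_le]
      rintro g ⟨n, m, hnm, rfl⟩
      exact single_mem_adjoin p n m hnm
  · intro f
    constructor
    · intro hf
      exact hadj hf
    · intro hf
      have := mem_span_of_support p f hf
      have hle : Submodule.span (ZMod p)
          {g : AddMonoidAlgebra (ZMod p) (ℤ × ℤ) |
            ∃ n m : ℤ, 0 ≤ n + m ∧ g = AddMonoidAlgebra.single (n, m) (1 : ZMod p)}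
          ≤ Subalgebra.toSubmodule (Algebra.adjoin (ZMod p) (genSet p)) := by
        rw [Submodule.span_le]
        rintro g ⟨n, m, hnm, rfl⟩
        exact single_mem_adjoin p n m hnm
      exact hle this
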